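/- Let V be an oriented 4-dimensional real vector space with inner product g and ρ a 2-form with ρ∧ρ > 0. For Θ := (*ρ)/u - (1/2)|ρ/u|²ρ with u := (ρ∧ρ)/(2 dvol_g), one has Θ∧Θ ≤ 0 (as a multiple of dvol_g), with equality if and only if ρ is self-dual. -/

import Mathlib

/-! With `v` the density of `dvol_g`, `q = |ρ|²_g` and `W` the density of `ρ ∧ ρ`, the Hodge star
`*` of `g` is an involution with `α ∧ *β = ⟨α, β⟩ dvol_g`. Hence `*ρ ∧ *ρ = ρ ∧ ρ` and
`ρ ∧ *ρ = q dvol_g`, and expanding `Θ ∧ Θ` gives the density `4 v² (W - v q) (W + v q) / W³`.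
Finally `|*ρ - ρ|² dvol_g = 2 (q dvol_g - ρ ∧ ρ)`, so `W ≤ v q`, with equality iff `*ρ = ρ`. -/
open Matrix MeasureTheory

noncomputable section

/-- Vectors in ℝ⁴. -/
abbrev V4 : Type := Fin 4 → ℝ

/-- 2-forms on ℝ⁴, represented by their (antisymmetric) coefficient matrices. -/
abbrev Mat4 : Type := Matrix (Fin 4) (Fin 4) ℝ

/-- The wedge product of two 2-forms, as the coefficient of dx0∧dx1∧dx2∧dx3. -/
def w22 (A B : Mat4) : ℝ :=
  A 0 1 * B 2 3 - A 0 2 * B 1 3 + A 0 3 * B 1 2 +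
  A 2 3 * B 0 1 - A 1 3 * B 0 2 + A 1 2 * B 0 3

/-- The wedge product of a 1-form and a 3-form (3-forms are written in the
basis σ_m = ι(e_m)(dx0∧dx1∧dx2∧dx3)), as a multiple of dx0∧dx1∧dx2∧dx3. -/
def w13 (l b : V4) : ℝ := l ⬝ᵥ b

/-- The wedge product of a 2-form and a 1-form, as a 3-form in the basis σ_m. -/
def w21 (A : Mat4) (l : V4) : V4 :=
  ![A 1 2 * l 3 - A 1 3 * l 2 + A 2 3 * l 1,
    -(A 0 2 * l 3 - A 0 3 * l 2 + A 2 3 * l 0),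
    A 0 1 * l 3 - A 0 3 * l 1 + A 1 3 * l 0,
    -(A 0 1 * l 2 - A 0 2 * l 1 + A 1 2 * l 0)]

/-- Interior product of a vector with a 2-form. -/
def iota2 (v : V4) (A : Mat4) : V4 := Aᵀ.mulVec v

/-- Interior product of a vector with a 4-form c·dx0∧dx1∧dx2∧dx3. -/
def iota4 (v : V4) (c : ℝ) : V4 := c • v

/-- The metric volume form of the inner product with Gram matrix G, as a
multiple of dx0∧dx1∧dx2∧dx3 (standard orientation). -/
def volScalar (G : Mat4) : ℝ := Real.sqrt G.det

/-- The inner product with Gram matrix G. -/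
def bilin (G : Mat4) (v w : V4) : ℝ := v ⬝ᵥ G.mulVec w

/-- The induced inner product on 1-forms. -/
def ip1 (G : Mat4) (l m : V4) : ℝ := l ⬝ᵥ G⁻¹.mulVec m

/-- The induced inner product on 2-forms. -/
def ip2 (G : Mat4) (A B : Mat4) : ℝ := (1 / 2) * (Aᵀ * G⁻¹ * B * G⁻¹).trace

/-- The wedge-duality involution on 2-forms (the Hodge star of the standard
metric), characterized by w22 A (dual2 B) = ip2 1 A B. -/
def dual2 (A : Mat4) : Mat4 :=
  !![0, A 2 3, -(A 1 3), A 1 2;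
     -(A 2 3), 0, A 0 3, -(A 0 2);
     A 1 3, -(A 0 3), 0, A 0 1;
     -(A 1 2), A 0 2, -(A 0 1), 0]

/-- The Hodge star on 2-forms of the metric with Gram matrix G,
characterized by α ∧ (hodge2 G β) = ⟨α,β⟩_G dvol_G. -/
def hodge2 (G : Mat4) (A : Mat4) : Mat4 := volScalar G • dual2 (G⁻¹ * A * G⁻¹)

/-- The Hodge star Λ¹ → Λ³ of G, characterized by λ ∧ (hodge1 G μ) = ⟨λ,μ⟩_G dvol_G. -/
def hodge1 (G : Mat4) (m : V4) : V4 := volScalar G • G⁻¹.mulVec m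

/-- The Hodge star Λ³ → Λ¹ of G, characterized by hodge1 G (hodge3 G b) = -b. -/
def hodge3 (G : Mat4) (b : V4) : V4 := -((volScalar G)⁻¹ • G.mulVec b)

/-- A complex structure J (J² = -1) is compatible with the standard orientation. -/
def posOrient (J : Mat4) : Prop :=
  ∃ v w : V4, 0 < (Matrix.of fun i k => ![v, J.mulVec v, w, J.mulVec w] k i).det

/-- The inner product on 2-forms induced by the standard metric. -/
def ip2std (A B : Mat4) : ℝ := (1 / 2) * (Aᵀ * B).trace

/-- The involution R^ρ of the space of 2-forms determined by a
nondegenerate 2-form ρ (with matrix P). -/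
def Rmap (P A : Mat4) : Mat4 := A - (w22 A P / (w22 P P / 2)) • P

/-- The standard hyperKähler triple ω₁ = dx0∧dx1 + dx2∧dx3, etc. -/
def sW1 : Mat4 := !![0,1,0,0; -1,0,0,0; 0,0,0,1; 0,0,-1,0]
def sW2 : Mat4 := !![0,0,1,0; 0,0,0,-1; -1,0,0,0; 0,1,0,0]
def sW3 : Mat4 := !![0,0,0,1; 0,0,1,0; 0,-1,0,0; -1,0,0,0]

theorem Matrix.apply_swap_of_transpose_eq_neg {n R : Type*} [Neg R] {P : Matrix n n R}
    (hP : Pᵀ = -P) (i j : n) : P j i = -P i j := by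
  simpa using congrFun (congrFun hP i) j

theorem Matrix.apply_self_of_transpose_eq_neg {n : Type*} {P : Matrix n n ℝ} (hP : Pᵀ = -P)
    (i : n) : P i i = 0 := by
  linarith [apply_swap_of_transpose_eq_neg hP i i]

theorem Matrix.trace_transpose_mul_mul_mul_eq {n : Type*} [Fintype n] (y N : Matrix n n ℝ) :
    (Nᵀ * (yᵀ * y) * N * (yᵀ * y)).trace = ((y * N * yᵀ)ᴴ * (y * N * yᵀ)).trace := by
  rw [← Matrix.mul_assoc, trace_mul_comm]
  simp only [conjTranspose_eq_transpose_of_trivial, transpose_mul, transpose_transpose,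
    Matrix.mul_assoc]

theorem Matrix.det_fin_four {R : Type*} [CommRing R] (M : Matrix (Fin 4) (Fin 4) R) : M.det =
    M 0 0 * (M 1 1 * (M 2 2 * M 3 3 - M 2 3 * M 3 2) - M 1 2 * (M 2 1 * M 3 3 - M 2 3 * M 3 1)
      + M 1 3 * (M 2 1 * M 3 2 - M 2 2 * M 3 1))
    - M 0 1 * (M 1 0 * (M 2 2 * M 3 3 - M 2 3 * M 3 2) - M 1 2 * (M 2 0 * M 3 3 - M 2 3 * M 3 0)
      + M 1 3 * (M 2 0 * M 3 2 - M 2 2 * M 3 0))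
    + M 0 2 * (M 1 0 * (M 2 1 * M 3 3 - M 2 3 * M 3 1) - M 1 1 * (M 2 0 * M 3 3 - M 2 3 * M 3 0)
      + M 1 3 * (M 2 0 * M 3 1 - M 2 1 * M 3 0))
    - M 0 3 * (M 1 0 * (M 2 1 * M 3 2 - M 2 2 * M 3 1) - M 1 1 * (M 2 0 * M 3 2 - M 2 2 * M 3 0)
      + M 1 2 * (M 2 0 * M 3 1 - M 2 1 * M 3 0)) := by
  rw [det_succ_row_zero, Fin.sum_univ_four]
  simp only [Nat.succ_eq_add_one, Nat.reduceAdd, Fin.isValue, Fin.coe_ofNat_eq_mod, Nat.zero_mod,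
    pow_zero, one_mul, Fin.succAbove_zero, det_fin_three, submatrix_apply, Fin.succ_zero_eq_one,
    Fin.succ_one_eq_two, Fin.reduceSucc, Nat.one_mod, pow_one, neg_mul, Fin.succAbove,
    Fin.castSucc_zero, zero_lt_one, ↓reduceIte, Fin.castSucc_one, lt_self_iff_false,
    Fin.reduceCastSucc, Fin.lt_one_iff, Fin.reduceEq, Nat.reduceMod, even_two, Even.neg_pow,
    one_pow, Fin.reduceLT, Nat.mod_succ]
  ring

theorem Matrix.PosDef.isSymm {n : Type*} [Fintype n] {G : Matrix n n ℝ} (hG : G.PosDef) :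
    G.IsSymm :=
  isHermitian_iff_isSymm.mp hG.isHermitian

namespace Matrix.PosDef

variable {n : Type*} [Fintype n] [DecidableEq n] {H : Matrix n n ℝ}

open scoped MatrixOrder in
theorem exists_isUnit_eq_transpose_mul_self (hH : H.PosDef) :
    ∃ y : Matrix n n ℝ, IsUnit y ∧ H = yᵀ * y := by
  obtain ⟨y, hy, rfl⟩ :=
    CStarAlgebra.isStrictlyPositive_iff_eq_star_mul_self.mp hH.isStrictlyPositive
  exact ⟨y, hy, by simp [star_eq_conjTranspose]⟩

theorem trace_transpose_mul_mul_mul_nonneg (hH : H.PosDef) (N : Matrix n n ℝ) :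
    0 ≤ (Nᵀ * H * N * H).trace := by
  obtain ⟨y, -, rfl⟩ := hH.exists_isUnit_eq_transpose_mul_self
  rw [trace_transpose_mul_mul_mul_eq]
  exact (posSemidef_conjTranspose_mul_self _).trace_nonneg

theorem trace_transpose_mul_mul_mul_eq_zero_iff (hH : H.PosDef) {N : Matrix n n ℝ} :
    (Nᵀ * H * N * H).trace = 0 ↔ N = 0 := by
  obtain ⟨y, hy, rfl⟩ := hH.exists_isUnit_eq_transpose_mul_self
  rw [trace_transpose_mul_mul_mul_eq, trace_conjTranspose_mul_self_eq_zero_iff,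
    IsUnit.mul_left_eq_zero ((isUnit_transpose y).mpr hy), hy.mul_right_eq_zero]

end Matrix.PosDef

theorem w22_comm (A B : Mat4) : w22 A B = w22 B A := by
  unfold w22; ring

theorem w22_smul_sub_smul_self (a b : ℝ) (A B : Mat4) :
    w22 (a • A - b • B) (a • A - b • B)
      = a ^ 2 * w22 A A - 2 * a * b * w22 A B + b ^ 2 * w22 B B := by
  simp only [w22, Matrix.sub_apply, Matrix.smul_apply, smul_eq_mul]
  ring

theorem dual2_transpose (A : Mat4) : (dual2 A)ᵀ = -dual2 A := by
  ext i j
  fin_cases i <;> fin_cases j <;> simp [dual2]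

theorem dual2_smul (c : ℝ) (A : Mat4) : dual2 (c • A) = c • dual2 A := by
  ext i j
  fin_cases i <;> fin_cases j <;> simp [dual2]

theorem dual2_dual2 {A : Mat4} (hA : Aᵀ = -A) : dual2 (dual2 A) = A := by
  have hs := apply_swap_of_transpose_eq_neg hA
  have hd := apply_self_of_transpose_eq_neg hA
  ext i j
  fin_cases i <;> fin_cases j <;>
    simp [dual2, hs 1 0, hs 2 0, hs 2 1, hs 3 0, hs 3 1, hs 3 2, hd 0, hd 1, hd 2, hd 3]

theorem w22_dual2 {A B : Mat4} (hA : Aᵀ = -A) (hB : Bᵀ = -B) :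
    w22 A (dual2 B) = 1 / 2 * (Aᵀ * B).trace := by
  have hsA := apply_swap_of_transpose_eq_neg hA
  have hdA := apply_self_of_transpose_eq_neg hA
  have hsB := apply_swap_of_transpose_eq_neg hB
  have hdB := apply_self_of_transpose_eq_neg hB
  simp only [w22, dual2, trace, diag_apply, mul_apply, transpose_apply, Fin.sum_univ_four,
    of_apply, cons_val', cons_val, cons_val_fin_one, cons_val_one, cons_val_zero, Fin.isValue,
    hsA 1 0, hsA 2 0, hsA 2 1, hsA 3 0, hsA 3 1, hsA 3 2, hdA 0, hdA 1, hdA 2, hdA 3,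
    hsB 1 0, hsB 2 0, hsB 2 1, hsB 3 0, hsB 3 1, hsB 3 2, hdB 0, hdB 1, hdB 2, hdB 3]
  ring

-- Naturality of the standard Hodge star `dual2` under the change of basis `H`, which scales `Λ⁴`
-- by `det H`.
theorem mul_dual2_mul_transpose (H : Mat4) {B : Mat4} (hB : Bᵀ = -B) :
    H * dual2 (Hᵀ * B * H) * Hᵀ = H.det • dual2 B := by
  have hs := apply_swap_of_transpose_eq_neg hB
  have hd := apply_self_of_transpose_eq_neg hB
  rw [det_fin_four]
  ext i j
  fin_cases i <;> fin_cases j <;>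
  · simp only [dual2, mul_apply, Fin.sum_univ_four, Matrix.smul_apply, smul_eq_mul, transpose_apply,
      of_apply, cons_val', cons_val_zero, cons_val_one, head_cons, empty_val', cons_val_fin_one,
      cons_val_two, cons_val_three, tail_cons, head_fin_const, Fin.isValue, Fin.zero_eta,
      Fin.mk_one, Fin.reduceFinMk,
      hs 1 0, hs 2 0, hs 2 1, hs 3 0, hs 3 1, hs 3 2, hd 0, hd 1, hd 2, hd 3]
    ring

theorem volScalar_pos {G : Mat4} (hG : G.PosDef) : 0 < volScalar G :=
  Real.sqrt_pos.mpr hG.det_pos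

theorem volScalar_mul_self_mul_det_inv {G : Mat4} (hG : G.PosDef) :
    volScalar G * volScalar G * G⁻¹.det = 1 := by
  rw [volScalar, Real.mul_self_sqrt hG.det_pos.le, mul_comm]
  exact det_nonsing_inv_mul_det G hG.det_pos.ne'.isUnit

theorem hodge2_transpose (G A : Mat4) : (hodge2 G A)ᵀ = -hodge2 G A := by
  rw [hodge2, transpose_smul, dual2_transpose, smul_neg]

theorem inv_mul_mul_inv_transpose {G A : Mat4} (hG : G.IsSymm) (hA : Aᵀ = -A) :
    (G⁻¹ * A * G⁻¹)ᵀ = -(G⁻¹ * A * G⁻¹) := by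
  simp only [transpose_mul, hG.inv.eq, hA, Matrix.neg_mul, Matrix.mul_neg, Matrix.mul_assoc]

theorem w22_hodge2 {G A B : Mat4} (hG : G.IsSymm) (hA : Aᵀ = -A) (hB : Bᵀ = -B) :
    w22 A (hodge2 G B) = volScalar G * ip2 G A B := by
  have hsmul : ∀ (c : ℝ) (M : Mat4), w22 A (c • M) = c * w22 A M := fun c M => by
    simp only [w22, Matrix.smul_apply, smul_eq_mul]; ring
  rw [hodge2, hsmul, w22_dual2 hA (inv_mul_mul_inv_transpose hG hB), ip2]
  simp only [Matrix.mul_assoc]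

theorem hodge2_hodge2 {G A : Mat4} (hG : G.PosDef) (hA : Aᵀ = -A) :
    hodge2 G (hodge2 G A) = A := by
  have hGinv : (G⁻¹)ᵀ = G⁻¹ := hG.isSymm.inv.eq
  have key := mul_dual2_mul_transpose G⁻¹ hA
  rw [hGinv] at key
  rw [hodge2, hodge2, Matrix.mul_smul, Matrix.smul_mul, dual2_smul, key, dual2_smul,
    dual2_dual2 hA, smul_smul, smul_smul, volScalar_mul_self_mul_det_inv hG, one_smul]

theorem ip2_comm {G : Mat4} (hG : G.IsSymm) (A B : Mat4) : ip2 G A B = ip2 G B A := by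
  rw [ip2, ip2, ← trace_transpose]
  simp only [transpose_mul, transpose_transpose, hG.inv.eq, Matrix.mul_assoc]
  rw [trace_mul_comm]
  simp only [Matrix.mul_assoc]

theorem ip2_sub_sub (G A B : Mat4) :
    ip2 G (A - B) (A - B) = ip2 G A A - ip2 G A B - ip2 G B A + ip2 G B B := by
  simp only [ip2, transpose_sub, Matrix.sub_mul, Matrix.mul_sub, trace_sub]
  ring

theorem ip2_self_nonneg {G : Mat4} (hG : G.PosDef) (A : Mat4) : 0 ≤ ip2 G A A :=
  mul_nonneg (by norm_num) (hG.inv.trace_transpose_mul_mul_mul_nonneg A)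

theorem ip2_self_eq_zero_iff {G A : Mat4} (hG : G.PosDef) : ip2 G A A = 0 ↔ A = 0 := by
  rw [ip2, mul_eq_zero, hG.inv.trace_transpose_mul_mul_mul_eq_zero_iff]
  norm_num

section HodgeStar

variable {G P : Mat4}

theorem w22_hodge2_hodge2_self (hG : G.PosDef) (hP : Pᵀ = -P) :
    w22 (hodge2 G P) (hodge2 G P) = w22 P P := by
  have hGs := hG.isSymm
  rw [w22_hodge2 hGs (hodge2_transpose G P) hP, ip2_comm hGs,
    ← w22_hodge2 hGs hP (hodge2_transpose G P), hodge2_hodge2 hG hP]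

theorem volScalar_mul_ip2_hodge2_sub_self (hG : G.PosDef) (hP : Pᵀ = -P) :
    volScalar G * ip2 G (hodge2 G P - P) (hodge2 G P - P)
      = 2 * (volScalar G * ip2 G P P - w22 P P) := by
  have hGs := hG.isSymm
  have hS := hodge2_transpose G P
  have hSS : volScalar G * ip2 G (hodge2 G P) (hodge2 G P) = volScalar G * ip2 G P P := by
    rw [← w22_hodge2 hGs hS hS, hodge2_hodge2 hG hP, w22_comm, w22_hodge2 hGs hP hP]
  have hSP : volScalar G * ip2 G P (hodge2 G P) = w22 P P := by
    rw [← w22_hodge2 hGs hP hS, hodge2_hodge2 hG hP]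
  rw [ip2_sub_sub, ip2_comm hGs (hodge2 G P) P]
  linear_combination hSS - 2 * hSP

theorem w22_self_le_volScalar_mul_ip2 (hG : G.PosDef) (hP : Pᵀ = -P) :
    w22 P P ≤ volScalar G * ip2 G P P := by
  have := mul_nonneg (volScalar_pos hG).le (ip2_self_nonneg hG (hodge2 G P - P))
  rw [volScalar_mul_ip2_hodge2_sub_self hG hP] at this
  linarith

theorem w22_self_eq_volScalar_mul_ip2_iff (hG : G.PosDef) (hP : Pᵀ = -P) :
    w22 P P = volScalar G * ip2 G P P ↔ hodge2 G P = P := by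
  rw [← sub_eq_zero (a := hodge2 G P), ← ip2_self_eq_zero_iff hG,
    ← mul_eq_zero_iff_left (volScalar_pos hG).ne', volScalar_mul_ip2_hodge2_sub_self hG hP,
    mul_eq_zero_iff_left two_ne_zero, sub_eq_zero, eq_comm]

end HodgeStar

/-- Θ∧Θ ≤ 0 (as a multiple of dvol_g), with equality iff ρ is
self-dual. -/
theorem Theta_square_nonpos (G : Mat4) (hG : G.PosDef)
    (P : Mat4) (hP : Pᵀ = -P) (hpos : 0 < w22 P P) :
    let u := w22 P P / (2 * volScalar G)
    let Θ := u⁻¹ • hodge2 G P - (2⁻¹ * (ip2 G P P / u ^ 2)) • P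
    w22 Θ Θ ≤ 0 ∧ (w22 Θ Θ = 0 ↔ hodge2 G P = P) := by
  intro u Θ
  have hv := volScalar_pos hG
  have hle := w22_self_le_volScalar_mul_ip2 hG hP
  have hΘ : w22 Θ Θ = 4 * volScalar G ^ 2 * (w22 P P - volScalar G * ip2 G P P)
      * (w22 P P + volScalar G * ip2 G P P) / w22 P P ^ 3 := by
    simp only [Θ, u, w22_smul_sub_smul_self, w22_hodge2_hodge2_self hG hP,
      w22_comm (hodge2 G P) P, w22_hodge2 hG.isSymm hP hP]
    field_simp
    ring
  have hW3 : 0 < w22 P P ^ 3 := by positivity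
  have hc : 0 < 4 * volScalar G ^ 2 := by positivity
  have hsum : 0 < w22 P P + volScalar G * ip2 G P P := by linarith
  rw [hΘ, ← w22_self_eq_volScalar_mul_ip2_iff hG hP, div_eq_zero_iff, or_iff_left hW3.ne',
    mul_eq_zero, mul_eq_zero, or_iff_right hc.ne', or_iff_left hsum.ne', sub_eq_zero]
  refine ⟨div_nonpos_of_nonpos_of_nonneg ?_ hW3.le, Iff.rfl⟩
  exact mul_nonpos_of_nonpos_of_nonneg
    (mul_nonpos_of_nonneg_of_nonpos hc.le (sub_nonpos.mpr hle)) hsum.le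

end
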